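/- arXiv:2004.10649 — 2 statements merged into one kernel-verified Lean document; each statement's English description precedes it below -/
import Mathlib

section
/- Let M be a pointed metric space such that SA(M, ℝ) is dense in Lip₀(M, ℝ), let ρ ∈ [0,1), and let Y be a real Banach space having ACK structure with parameter ρ. Then SA_K(M, Y) is dense in Lipc(M, Y). -/
open Set Metric NNReal MeasureTheory

/-- A Lipschitz map vanishing at the base point `z`, i.e. an element of `Lip₀(M,Y)`. -/
def IsLip0 {M Y : Type*} [MetricSpace M] [NormedAddCommGroup Y]
    (z : M) (F : M → Y) : Prop :=
  (∃ K : ℝ≥0, LipschitzWith K F) ∧ F z = 0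

/-- The Lipschitz norm `‖F‖_L = sup {‖F p - F q‖ / d(p,q) : p ≠ q}`. -/
noncomputable def lipNorm {M Y : Type*} [MetricSpace M] [NormedAddCommGroup Y]
    (F : M → Y) : ℝ :=
  sSup {r : ℝ | ∃ p q : M, p ≠ q ∧ r = ‖F p - F q‖ / dist p q}

/-- `F` strongly attains its norm. -/
def StronglyAttains {M Y : Type*} [MetricSpace M] [NormedAddCommGroup Y]
    (F : M → Y) : Prop :=
  ∃ p q : M, p ≠ q ∧ ‖F p - F q‖ = lipNorm F * dist p q

/-- `F` is Lipschitz compact: its Lipschitz image is relatively compact. -/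
def IsLipCompact {M Y : Type*} [MetricSpace M] [NormedAddCommGroup Y] [NormedSpace ℝ Y]
    (F : M → Y) : Prop :=
  IsCompact (closure {y : Y | ∃ p q : M, p ≠ q ∧ y = (dist p q)⁻¹ • (F p - F q)})

/-- The pair `(M,Y)` has the Lip-BPB property witnessed by the function `η`. -/
def LipBPBWith (M : Type*) [MetricSpace M] (z : M)
    (Y : Type*) [NormedAddCommGroup Y] (η : ℝ → ℝ) : Prop :=
  (∀ ε > 0, η ε > 0) ∧
  ∀ ε > 0, ∀ F : M → Y, IsLip0 z F → lipNorm F = 1 →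
    ∀ p q : M, p ≠ q → ‖F p - F q‖ > (1 - η ε) * dist p q →
      ∃ G : M → Y, IsLip0 z G ∧ ∃ r s : M, r ≠ s ∧
        ‖G r - G s‖ = dist r s ∧ lipNorm G = 1 ∧
        lipNorm (fun x => G x - F x) < ε ∧
        (dist p r + dist q s) / dist p q < ε

/-- The pair `(M,Y)` has the Lip-BPB property. -/
def LipBPB (M : Type*) [MetricSpace M] (z : M)
    (Y : Type*) [NormedAddCommGroup Y] : Prop :=
  ∃ η : ℝ → ℝ, LipBPBWith M z Y η

/-- The pair `(M,Y)` has the Lip-BPB property for Lipschitz compact maps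
witnessed by the function `η`. -/
def LipBPBCompactWith (M : Type*) [MetricSpace M] (z : M)
    (Y : Type*) [NormedAddCommGroup Y] [NormedSpace ℝ Y] (η : ℝ → ℝ) : Prop :=
  (∀ ε > 0, η ε > 0) ∧
  ∀ ε > 0, ∀ F : M → Y, IsLip0 z F → IsLipCompact F → lipNorm F = 1 →
    ∀ p q : M, p ≠ q → ‖F p - F q‖ > (1 - η ε) * dist p q →
      ∃ G : M → Y, IsLip0 z G ∧ IsLipCompact G ∧ ∃ r s : M, r ≠ s ∧
        ‖G r - G s‖ = dist r s ∧ lipNorm G = 1 ∧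
        lipNorm (fun x => G x - F x) < ε ∧
        (dist p r + dist q s) / dist p q < ε

/-- The pair `(M,Y)` has the Lip-BPB property for Lipschitz compact maps. -/
def LipBPBCompact (M : Type*) [MetricSpace M] (z : M)
    (Y : Type*) [NormedAddCommGroup Y] [NormedSpace ℝ Y] : Prop :=
  ∃ η : ℝ → ℝ, LipBPBCompactWith M z Y η

/-- `SA(M,Y)` is dense in `Lip₀(M,Y)`. -/
def SADense (M : Type*) [MetricSpace M] (z : M)
    (Y : Type*) [NormedAddCommGroup Y] : Prop :=
  ∀ F : M → Y, IsLip0 z F → ∀ ε > 0,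
    ∃ G : M → Y, IsLip0 z G ∧ StronglyAttains G ∧ lipNorm (fun x => G x - F x) < ε

/-- `SA_K(M,Y)` is dense in `Lipc(M,Y)`. -/
def SAKDense (M : Type*) [MetricSpace M] (z : M)
    (Y : Type*) [NormedAddCommGroup Y] [NormedSpace ℝ Y] : Prop :=
  ∀ F : M → Y, IsLip0 z F → IsLipCompact F → ∀ ε > 0,
    ∃ G : M → Y, IsLip0 z G ∧ IsLipCompact G ∧ StronglyAttains G ∧
      lipNorm (fun x => G x - F x) < ε

/-- A set of functionals on `Y` is weak-star open. -/
def IsWeakStarOpen {Y : Type*} [NormedAddCommGroup Y] [NormedSpace ℝ Y]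
    (U : Set (Y →L[ℝ] ℝ)) : Prop :=
  IsOpen (X := WeakDual ℝ Y) (StrongDual.toWeakDual '' U)

/-- `Γ ⊆ B_{Y*}` is a 1-norming set. -/
def IsOneNorming {Y : Type*} [NormedAddCommGroup Y] [NormedSpace ℝ Y]
    (Γ : Set (Y →L[ℝ] ℝ)) : Prop :=
  (∀ φ ∈ Γ, ‖φ‖ ≤ 1) ∧ ∀ y : Y, ‖y‖ = sSup {t : ℝ | ∃ φ ∈ Γ, t = |φ y|}

/-- `Y` has ACK structure with parameter `ρ`, witnessed by the 1-norming set `Γ`. -/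
def ACKWith (Y : Type*) [NormedAddCommGroup Y] [NormedSpace ℝ Y]
    (ρ : ℝ) (Γ : Set (Y →L[ℝ] ℝ)) : Prop :=
  IsOneNorming Γ ∧
  ∀ ε > (0 : ℝ), ∀ U : Set (Y →L[ℝ] ℝ), U.Nonempty → U ⊆ Γ →
    (∃ W : Set (Y →L[ℝ] ℝ), IsWeakStarOpen W ∧ U = W ∩ Γ) →
    ∃ V ⊆ U, V.Nonempty ∧ ∃ y₁ ∈ V, ∃ e : Y, ‖e‖ = 1 ∧ ∃ F : Y →L[ℝ] Y,
      ‖F e‖ = 1 ∧ ‖F‖ = 1 ∧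
      y₁ (F e) = 1 ∧
      y₁.comp F = y₁ ∧
      (∀ φ ∈ Γ, φ ∉ {ψ ∈ Γ | ‖ψ.comp F‖ + (1 - ε) * ‖ψ - ψ.comp F‖ ≤ 1} →
        |φ (F e)| ≤ ρ) ∧
      (∀ φ ∈ Γ, ∃ (n : ℕ) (v : Fin n → (Y →L[ℝ] ℝ)) (c : Fin n → ℝ),
        (∀ k, v k ∈ V) ∧ (∑ k, |c k|) ≤ 1 ∧
        ‖φ.comp F - ∑ k, c k • v k‖ < ε) ∧
      (∀ φ ∈ V, |φ e - 1| ≤ ε)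

/-- `Y` has ACK structure with parameter `ρ`. -/
def HasACK (Y : Type*) [NormedAddCommGroup Y] [NormedSpace ℝ Y] (ρ : ℝ) : Prop :=
  ∃ Γ : Set (Y →L[ℝ] ℝ), ACKWith Y ρ Γ

/-- `T : M → Y` is a `Γ`-flat map. -/
def IsGammaFlat {M Y : Type*} [MetricSpace M] [NormedAddCommGroup Y] [NormedSpace ℝ Y]
    (Γ : Set (Y →L[ℝ] ℝ)) (T : M → Y) : Prop :=
  ∀ U : Set (Y →L[ℝ] ℝ), IsWeakStarOpen U → (U ∩ Γ).Nonempty → ∀ δ > (0 : ℝ),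
    ∃ V : Set (Y →L[ℝ] ℝ), IsWeakStarOpen V ∧ V ⊆ U ∧ (V ∩ Γ).Nonempty ∧
      ∀ φ ∈ V ∩ Γ, ∀ ψ ∈ V ∩ Γ, lipNorm (fun x => φ (T x) - ψ (T x)) < δ

/-!
Normalise `lipNorm T = 1` and choose `p₀ ≠ q₀` and `φ₀ ∈ Γ` with
`(1 - t) d(p₀, q₀) < |φ₀ (T p₀ - T q₀)|`. Since `T` is Lipschitz compact, functionals of `Γ` that
are weak-star close agree up to `t` on its Lipschitz image (`T` is `Γ`-flat), so the ACK structure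
applied near `φ₀` yields `y₁`, `e` and an operator `F` such that, at `e` and on differences of `T`,
every `φ ∘ F` with `φ ∈ Γ` is close to a multiple `l • y₁` with `|l| ≤ 1`. Approximate `y₁ ∘ T` by a
strongly norm-attaining `g : M → ℝ` and put `G = (1 - F) ∘ T + (1 + c) g • F e`. As `y₁ ∘ F = y₁`
and `y₁ (F e) = 1`, the functional `y₁` sees exactly `(1 + c) (g p - g q)`, so `G` attains
`(1 + c) ‖g‖_L` where `g` attains its norm. Conversely, test with `φ ∈ Γ`: if
`‖φ ∘ F‖ + (1 - t) ‖φ - φ ∘ F‖ ≤ 1` the bound is immediate, and otherwise `|φ (F e)| ≤ ρ < 1`, a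
loss that the boost `1 + c` absorbs. Finally `G - T = (1 + c) g • F e - F ∘ T` is small because
both terms are close to `l • y₁ ∘ T`.
-/

section LipNorm

variable {M Y : Type*} [MetricSpace M] [NormedAddCommGroup Y]

lemma lipNorm_nonneg (F : M → Y) : 0 ≤ lipNorm F :=
  Real.sSup_nonneg fun _ ⟨_, _, _, hr⟩ => hr ▸ by positivity

lemma lipNorm_le {F : M → Y} {C : ℝ} (hC : 0 ≤ C)
    (h : ∀ p q, ‖F p - F q‖ ≤ C * dist p q) : lipNorm F ≤ C :=
  Real.sSup_le (fun _ ⟨p, q, hpq, hr⟩ => hr ▸ (div_le_iff₀ (dist_pos.2 hpq)).2 (h p q)) hC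

lemma LipschitzWith.div_dist_le_lipNorm {F : M → Y} {K : ℝ≥0} (hF : LipschitzWith K F)
    {p q : M} (hpq : p ≠ q) : ‖F p - F q‖ / dist p q ≤ lipNorm F := by
  refine le_csSup ⟨K, ?_⟩ ⟨p, q, hpq, rfl⟩
  rintro _ ⟨p, q, hpq, rfl⟩
  rw [div_le_iff₀ (dist_pos.2 hpq), ← dist_eq_norm]
  exact hF.dist_le_mul p q

lemma LipschitzWith.norm_sub_le_lipNorm_mul {F : M → Y} {K : ℝ≥0} (hF : LipschitzWith K F)
    (p q : M) : ‖F p - F q‖ ≤ lipNorm F * dist p q := by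
  rcases eq_or_ne p q with rfl | hpq
  · simp
  · exact (div_le_iff₀ (dist_pos.2 hpq)).1 (hF.div_dist_le_lipNorm hpq)

lemma IsLip0.norm_sub_le_lipNorm_mul {z : M} {F : M → Y} (hF : IsLip0 z F) (p q : M) :
    ‖F p - F q‖ ≤ lipNorm F * dist p q :=
  hF.1.choose_spec.norm_sub_le_lipNorm_mul p q

lemma lipNorm_eq_of_le_of_eq {F : M → Y} {C : ℝ} (hC : 0 ≤ C)
    (h : ∀ p q, ‖F p - F q‖ ≤ C * dist p q) {r s : M} (hrs : r ≠ s)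
    (hF : ‖F r - F s‖ = C * dist r s) : lipNorm F = C := by
  have hlip : LipschitzWith ⟨C, hC⟩ F :=
    LipschitzWith.of_dist_le_mul fun p q => (dist_eq_norm _ _).trans_le (h p q)
  refine (lipNorm_le hC h).antisymm ?_
  have := hlip.div_dist_le_lipNorm hrs
  rwa [hF, mul_div_cancel_right₀ _ (dist_pos.2 hrs).ne'] at this

lemma exists_mul_dist_lt_of_lt_lipNorm {F : M → Y} {r : ℝ} (hr : 0 ≤ r) (h : r < lipNorm F) :
    ∃ p q, p ≠ q ∧ r * dist p q < ‖F p - F q‖ := by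
  have hne : {x : ℝ | ∃ p q : M, p ≠ q ∧ x = ‖F p - F q‖ / dist p q}.Nonempty := by
    by_contra hempty
    rw [Set.not_nonempty_iff_eq_empty] at hempty
    simp only [lipNorm, hempty, Real.sSup_empty] at h
    linarith
  obtain ⟨_, ⟨p, q, hpq, rfl⟩, hlt⟩ := exists_lt_of_lt_csSup hne h
  exact ⟨p, q, hpq, (lt_div_iff₀ (dist_pos.2 hpq)).1 hlt⟩

lemma isLip0_of_norm_sub_le {z : M} {F : M → Y} (hz : F z = 0) {C : ℝ} (hC : 0 ≤ C)
    (h : ∀ p q, ‖F p - F q‖ ≤ C * dist p q) : IsLip0 z F :=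
  ⟨⟨⟨C, hC⟩, LipschitzWith.of_dist_le_mul fun p q => (dist_eq_norm _ _).trans_le (h p q)⟩, hz⟩

lemma IsLip0.sub {z : M} {F G : M → Y} (hF : IsLip0 z F) (hG : IsLip0 z G) :
    IsLip0 z fun x => F x - G x :=
  ⟨⟨_, hF.1.choose_spec.sub hG.1.choose_spec⟩, by simp [hF.2, hG.2]⟩

variable [NormedSpace ℝ Y]

lemma IsLip0.clm_comp {z : M} {F : M → Y} (hF : IsLip0 z F) (A : Y →L[ℝ] ℝ) :
    IsLip0 z fun x => A (F x) :=
  ⟨⟨_, A.lipschitz.comp hF.1.choose_spec⟩, by simp [hF.2]⟩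

lemma lipNorm_const_smul (a : ℝ) (F : M → Y) :
    lipNorm (fun x => a • F x) = |a| * lipNorm F := by
  rw [lipNorm, lipNorm, ← smul_eq_mul, ← Real.sSup_smul_of_nonneg (abs_nonneg a)]
  congr 1
  ext x
  simp only [Set.mem_smul_set, smul_eq_mul]
  constructor
  · rintro ⟨p, q, hpq, rfl⟩
    exact ⟨_, ⟨p, q, hpq, rfl⟩, by rw [← smul_sub, norm_smul, Real.norm_eq_abs, mul_div_assoc]⟩
  · rintro ⟨_, ⟨p, q, hpq, rfl⟩, rfl⟩
    exact ⟨p, q, hpq, by rw [← smul_sub, norm_smul, Real.norm_eq_abs, mul_div_assoc]⟩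

lemma IsLip0.const_smul {z : M} {F : M → Y} (hF : IsLip0 z F) (a : ℝ) :
    IsLip0 z fun x => a • F x :=
  ⟨⟨_, (lipschitzWith_smul a).comp hF.1.choose_spec⟩, by simp [hF.2]⟩

lemma StronglyAttains.const_smul {F : M → Y} (hF : StronglyAttains F) (a : ℝ) :
    StronglyAttains fun x => a • F x := by
  obtain ⟨p, q, hpq, h⟩ := hF
  refine ⟨p, q, hpq, ?_⟩
  rw [lipNorm_const_smul, ← smul_sub, norm_smul, h, Real.norm_eq_abs, mul_assoc]

end LipNorm

section LipCompact

variable {M Y : Type*} [MetricSpace M] [NormedAddCommGroup Y] [NormedSpace ℝ Y]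

def lipImage (F : M → Y) : Set Y :=
  {y | ∃ p q : M, p ≠ q ∧ y = (dist p q)⁻¹ • (F p - F q)}

lemma isLipCompact_zero : IsLipCompact fun _ : M => (0 : Y) :=
  (isCompact_singleton (x := 0)).closure_of_subset (by rintro _ ⟨p, q, -, rfl⟩; simp)

lemma IsLipCompact.comp_add_smul {F : M → Y} (hF : IsLipCompact F) (A : Y →L[ℝ] Y)
    {h : M → ℝ} {K : ℝ} (hh : ∀ p q, |h p - h q| ≤ K * dist p q) (u : Y) :
    IsLipCompact fun x => A (F x) + h x • u := by
  have hΨ : Continuous fun v : Y × ℝ => A v.1 + v.2 • u := by fun_prop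
  refine ((hF.prod (isCompact_Icc (a := -K) (b := K))).image hΨ).closure_of_subset ?_
  rintro _ ⟨p, q, hpq, rfl⟩
  have hd := dist_pos.2 hpq
  refine ⟨((dist p q)⁻¹ • (F p - F q), (dist p q)⁻¹ * (h p - h q)),
    ⟨subset_closure ⟨p, q, hpq, rfl⟩, abs_le.1 ?_⟩, ?_⟩
  · rw [abs_mul, abs_inv, abs_of_pos hd, inv_mul_le_iff₀ hd, mul_comm]
    exact hh p q
  · simp only [map_smul, map_sub, mul_smul, sub_smul]
    module

lemma IsLipCompact.const_smul {F : M → Y} (hF : IsLipCompact F) (a : ℝ) :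
    IsLipCompact fun x => a • F x := by
  simpa using hF.comp_add_smul (a • 1) (h := 0) (K := 0) (by simp) 0

end LipCompact

lemma abs_one_add_mul_mul_sub_le {u k l y Δ c t d : ℝ} (hc : 0 ≤ c) (hl : |l| ≤ 1)
    (hkl : |k - l| ≤ 2 * t) (hu : |u - l * y| ≤ 2 * t * d) (hΔ : |Δ - y| ≤ t * d) :
    |(1 + c) * Δ * k - u| ≤ 3 * t * d + (2 * t + c * |k|) * |Δ| := by
  have hlΔ : |l * (Δ - y)| ≤ t * d := by
    rw [abs_mul]; exact mul_le_of_le_one_left (abs_nonneg _) hl |>.trans hΔ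
  have hkΔ : |(k - l + c * k) * Δ| ≤ (2 * t + c * |k|) * |Δ| := by
    rw [abs_mul]
    refine mul_le_mul_of_nonneg_right ((abs_add_le _ _).trans ?_) (abs_nonneg _)
    rw [abs_mul, abs_of_nonneg hc]
    linarith
  calc |(1 + c) * Δ * k - u| = |-(u - l * y) + l * (Δ - y) + (k - l + c * k) * Δ| := by
        ring_nf
    _ ≤ |u - l * y| + |l * (Δ - y)| + |(k - l + c * k) * Δ| := by
        refine (abs_add_le _ _).trans (add_le_add_left ((abs_add_le _ _).trans ?_) _)
        rw [abs_neg]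
    _ ≤ 3 * t * d + (2 * t + c * |k|) * |Δ| := by linarith

section Dual

variable {Y : Type*} [NormedAddCommGroup Y] [NormedSpace ℝ Y]

lemma isWeakStarOpen_iff {U : Set (StrongDual ℝ Y)} :
    IsWeakStarOpen U ↔ IsOpen (StrongDual.toWeakDual.symm ⁻¹' U) := by
  rw [IsWeakStarOpen, LinearEquiv.image_eq_preimage_symm]

lemma IsWeakStarOpen.inter {U V : Set (StrongDual ℝ Y)} (hU : IsWeakStarOpen U)
    (hV : IsWeakStarOpen V) : IsWeakStarOpen (U ∩ V) := by
  rw [isWeakStarOpen_iff] at *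
  exact hU.inter hV

lemma isWeakStarOpen_setOf_lt_abs_apply (y : Y) (a : ℝ) :
    IsWeakStarOpen {φ : StrongDual ℝ Y | a < |φ y|} :=
  isWeakStarOpen_iff.2 <| isOpen_lt continuous_const (WeakDual.eval_continuous y).abs

lemma isWeakStarOpen_setOf_forall_abs_sub_lt {s : Set Y} (hs : s.Finite) (φ₀ : StrongDual ℝ Y)
    (δ : ℝ) : IsWeakStarOpen {φ : StrongDual ℝ Y | ∀ y ∈ s, |φ y - φ₀ y| < δ} := by
  rw [isWeakStarOpen_iff]
  convert hs.isOpen_biInter fun y _ => isOpen_lt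
    ((WeakDual.eval_continuous (𝕜 := ℝ) y).sub (continuous_const (y := φ₀ y))).abs
    (continuous_const (y := δ))
  ext
  simp

lemma IsOneNorming.norm_le {Γ : Set (StrongDual ℝ Y)} (hΓ : IsOneNorming Γ) {y : Y} {C : ℝ}
    (hC : 0 ≤ C) (h : ∀ φ ∈ Γ, |φ y| ≤ C) : ‖y‖ ≤ C := by
  rw [hΓ.2 y]
  exact Real.sSup_le (by rintro _ ⟨φ, hφ, rfl⟩; exact h φ hφ) hC

lemma IsOneNorming.exists_lt_abs_apply {Γ : Set (StrongDual ℝ Y)} (hΓ : IsOneNorming Γ) {y : Y}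
    {r : ℝ} (hr : 0 ≤ r) (h : r < ‖y‖) : ∃ φ ∈ Γ, r < |φ y| := by
  rw [hΓ.2 y] at h
  have hne : {s : ℝ | ∃ φ ∈ Γ, s = |φ y|}.Nonempty := by
    by_contra hempty
    rw [Set.not_nonempty_iff_eq_empty] at hempty
    rw [hempty, Real.sSup_empty] at h
    linarith
  obtain ⟨_, ⟨φ, hφ, rfl⟩, hlt⟩ := exists_lt_of_lt_csSup hne h
  exact ⟨φ, hφ, hlt⟩

lemma abs_apply_sub_sum_mul_le (ψ : StrongDual ℝ Y) {n : ℕ} (v : Fin n → StrongDual ℝ Y)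
    {c : Fin n → ℝ} (hc : ∑ k, |c k| ≤ 1) (x : Y) {a s : ℝ} (hs : 0 ≤ s)
    (hv : ∀ k, |v k x - a| ≤ s) :
    |ψ x - (∑ k, c k) * a| ≤ ‖ψ - ∑ k, c k • v k‖ * ‖x‖ + s := by
  have hψ : |ψ x - (∑ k, c k • v k) x| ≤ ‖ψ - ∑ k, c k • v k‖ * ‖x‖ := by
    simpa using (ψ - ∑ k, c k • v k).le_opNorm x
  have hsum : |(∑ k, c k • v k) x - (∑ k, c k) * a| ≤ s :=
    calc |(∑ k, c k • v k) x - (∑ k, c k) * a| = |∑ k, c k * (v k x - a)| := by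
          simp [Finset.sum_mul, mul_sub]
      _ ≤ ∑ k, |c k| * s := by
          refine (Finset.abs_sum_le_sum_abs _ _).trans (Finset.sum_le_sum fun k _ => ?_)
          rw [abs_mul]
          exact mul_le_mul_of_nonneg_left (hv k) (abs_nonneg _)
      _ ≤ s := by rw [← Finset.sum_mul]; exact mul_le_of_le_one_left hs hc
  linarith [abs_sub_le (ψ x) ((∑ k, c k • v k) x) ((∑ k, c k) * a)]


variable {φ y₁ : StrongDual ℝ Y} {F : Y →L[ℝ] Y} {e w : Y}

lemma apply_sub_add_smul (a : ℝ) :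
    φ (w - F w + a • F e) = φ w - φ (F w) + a * φ (F e) := by
  simp

lemma abs_apply_sub_add_smul_le {ρ t c G d Δ l : ℝ} (hφ : ‖φ‖ ≤ 1) (he : ‖e‖ = 1)
    (hc : 0 ≤ c) (ht1 : t ≤ 1) (hw : ‖w‖ ≤ d) (hΔG : |Δ| ≤ G * d) (hΔ : |Δ - y₁ w| ≤ t * d)
    (hl : |l| ≤ 1) (hkl : |φ (F e) - l| ≤ 2 * t) (hu : |φ (F w) - l * y₁ w| ≤ 2 * t * d)
    (hρ : 1 < ‖φ.comp F‖ + (1 - t) * ‖φ - φ.comp F‖ → |φ (F e)| ≤ ρ)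
    (hA : 1 ≤ (1 - t) * ((1 + c) * G))
    (hB : 1 + 3 * t + (2 * t + c * ρ) * G ≤ (1 + c) * G) :
    |φ (w - F w + ((1 + c) * Δ) • F e)| ≤ (1 + c) * G * d := by
  have hd : 0 ≤ d := (norm_nonneg _).trans hw
  have hG : 0 ≤ G * d := (abs_nonneg _).trans hΔG
  rw [apply_sub_add_smul]
  rcases le_or_gt (‖φ.comp F‖ + (1 - t) * ‖φ - φ.comp F‖) 1 with hV₁ | hV₁
  · have hu : |φ w - φ (F w)| ≤ ‖φ - φ.comp F‖ * d := by
      simpa using ((φ - φ.comp F).le_opNorm w).trans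
        (mul_le_mul_of_nonneg_left hw (norm_nonneg _))
    have hk : |φ (F e)| ≤ ‖φ.comp F‖ := by simpa [he] using (φ.comp F).le_opNorm e
    have hX : 0 ≤ (1 + c) * G := by nlinarith
    have hb : ‖φ - φ.comp F‖ ≤ (1 - ‖φ.comp F‖) * ((1 + c) * G) :=
      calc ‖φ - φ.comp F‖ ≤ ‖φ - φ.comp F‖ * ((1 - t) * ((1 + c) * G)) :=
            le_mul_of_one_le_right (norm_nonneg _) hA
        _ = (1 - t) * ‖φ - φ.comp F‖ * ((1 + c) * G) := by ring
        _ ≤ (1 - ‖φ.comp F‖) * ((1 + c) * G) := by gcongr; linarith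
    calc |φ w - φ (F w) + (1 + c) * Δ * φ (F e)|
        ≤ |φ w - φ (F w)| + (1 + c) * |Δ| * |φ (F e)| := by
          refine (abs_add_le _ _).trans_eq ?_
          rw [abs_mul, abs_mul, abs_of_nonneg (by linarith : 0 ≤ 1 + c)]
      _ ≤ ‖φ - φ.comp F‖ * d + (1 + c) * (G * d) * ‖φ.comp F‖ := by gcongr
      _ ≤ (1 + c) * G * d := by nlinarith
  · have hk := hρ hV₁
    have hφw : |φ w| ≤ d := by
      simpa using (φ.le_opNorm w).trans (mul_le_mul hφ hw (norm_nonneg _) zero_le_one)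
    have hcancel := abs_one_add_mul_mul_sub_le hc hl hkl hu hΔ
    have ht : 0 ≤ t := by linarith [abs_nonneg (φ (F e) - l)]
    calc |φ w - φ (F w) + (1 + c) * Δ * φ (F e)|
        ≤ |φ w| + |(1 + c) * Δ * φ (F e) - φ (F w)| := by
          rw [sub_add_eq_add_sub, add_sub_assoc]; exact abs_add_le _ _
      _ ≤ |φ w| + (3 * t * d + (2 * t + c * |φ (F e)|) * |Δ|) := by linarith
      _ ≤ d + (3 * t * d + (2 * t + c * ρ) * (G * d)) := by
          gcongr; nlinarith [(abs_nonneg (φ (F e))).trans hk]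
      _ ≤ (1 + c) * G * d := by nlinarith

lemma abs_apply_smul_sub_le {t c d Δ l : ℝ} (hφ : ‖φ‖ ≤ 1) (hF : ‖F‖ ≤ 1) (he : ‖e‖ = 1)
    (hc : 0 ≤ c) (hΔd : |Δ| ≤ (1 + t) * d) (hΔ : |Δ - y₁ w| ≤ t * d) (hl : |l| ≤ 1)
    (hkl : |φ (F e) - l| ≤ 2 * t) (hu : |φ (F w) - l * y₁ w| ≤ 2 * t * d) :
    |φ (((1 + c) * Δ) • F e - F w)| ≤ (3 * t + (2 * t + c) * (1 + t)) * d := by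
  have hk : |φ (F e)| ≤ 1 :=
    (by simpa [he] using (φ.comp F).le_opNorm e : |φ (F e)| ≤ ‖φ.comp F‖).trans
      ((φ.opNorm_comp_le F).trans (mul_le_one₀ hφ (norm_nonneg _) hF))
  have ht : 0 ≤ t := by linarith [abs_nonneg (φ (F e) - l)]
  rw [map_sub, map_smul, smul_eq_mul]
  calc |(1 + c) * Δ * φ (F e) - φ (F w)| ≤ 3 * t * d + (2 * t + c * |φ (F e)|) * |Δ| :=
        by simpa [mul_assoc] using abs_one_add_mul_mul_sub_le hc hl hkl hu hΔ
    _ ≤ 3 * t * d + (2 * t + c * 1) * ((1 + t) * d) := by gcongr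
    _ = (3 * t + (2 * t + c) * (1 + t)) * d := by ring

lemma abs_le_norm_sub_add_smul (hy₁ : ‖y₁‖ ≤ 1) (hy₁F : y₁.comp F = y₁)
    (hy₁Fe : y₁ (F e) = 1) (a : ℝ) : |a| ≤ ‖w - F w + a • F e‖ := by
  have h : y₁ (w - F w + a • F e) = a := by
    rw [apply_sub_add_smul, ← y₁.comp_apply F, hy₁F, hy₁Fe]; ring
  calc |a| = ‖y₁ (w - F w + a • F e)‖ := by rw [h, Real.norm_eq_abs]
    _ ≤ ‖w - F w + a • F e‖ :=
        (y₁.le_opNorm _).trans (mul_le_of_le_one_left (norm_nonneg _) hy₁)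

end Dual

lemma exists_ack_constants {ρ ε : ℝ} (hρ0 : 0 ≤ ρ) (hρ1 : ρ < 1) (hε : 0 < ε) :
    ∃ t c : ℝ, 0 < t ∧ 0 ≤ c ∧ t < 1 / 2 ∧
      (∀ G, 1 - 2 * t ≤ G → 1 ≤ (1 - t) * ((1 + c) * G) ∧
        1 + 3 * t + (2 * t + c * ρ) * G ≤ (1 + c) * G) ∧
      3 * t + (2 * t + c) * (1 + t) < ε := by
  set c := min 2 (ε / 2)
  have hc : 0 < c := lt_min two_pos (half_pos hε)
  have hc2 : c ≤ 2 := min_le_left _ _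
  have hcε : c ≤ ε / 2 := min_le_right _ _
  set t := c * (1 - ρ) / 16 with ht_def
  -- the boost `1 + c` has to beat the factor `ρ` of the functionals outside `V₁`
  have hct : c * (1 - ρ) = 16 * t := by rw [ht_def]; ring
  have ht : 0 < t := by have := sub_pos.2 hρ1; positivity
  have ht16 : 16 * t ≤ c := by nlinarith
  have ht8 : t ≤ 1 / 8 := by nlinarith
  refine ⟨t, c, ht, hc.le, by linarith, fun G hG => ⟨?_, ?_⟩, by nlinarith⟩
  · have h16 : 1 ≤ (1 - t) * (1 - 2 * t) * (1 + c) := by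
      nlinarith [mul_le_mul_of_nonneg_left (by linarith : 1 + 16 * t ≤ 1 + c)
        (by nlinarith : (0 : ℝ) ≤ (1 - t) * (1 - 2 * t)),
        mul_le_mul_of_nonneg_left ht8 ht.le, mul_pos (mul_pos ht ht) ht]
    nlinarith [mul_le_mul_of_nonneg_left hG (by nlinarith : (0 : ℝ) ≤ (1 - t) * (1 + c))]
  · nlinarith [mul_le_mul_of_nonneg_left hG (by linarith : (0 : ℝ) ≤ 1 + 14 * t)]

section Construction

variable {M Y : Type*} [MetricSpace M] [NormedAddCommGroup Y] [NormedSpace ℝ Y]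

lemma IsLipCompact.isGammaFlat {Γ : Set (StrongDual ℝ Y)} (hΓ : ∀ φ ∈ Γ, ‖φ‖ ≤ 1) {T : M → Y}
    (hT : IsLipCompact T) : IsGammaFlat Γ T := by
  rintro U hU ⟨φ₀, hφ₀U, hφ₀Γ⟩ δ hδ
  obtain ⟨s, -, hs, hcover⟩ := finite_cover_balls_of_compact hT (e := δ / 8) (by positivity)
  refine ⟨U ∩ {φ | ∀ y ∈ s, |φ y - φ₀ y| < δ / 8},
    hU.inter (isWeakStarOpen_setOf_forall_abs_sub_lt hs φ₀ _), Set.inter_subset_left,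
    ⟨φ₀, ⟨hφ₀U, fun y _ => by simpa using hδ⟩, hφ₀Γ⟩, ?_⟩
  rintro α ⟨⟨-, hα⟩, hαΓ⟩ β ⟨⟨-, hβ⟩, hβΓ⟩
  have hclose : ∀ y ∈ closure (lipImage T), |α y - β y| ≤ δ / 2 := by
    intro y hy
    obtain ⟨c, hcs, hyc⟩ := Set.mem_iUnion₂.1 (hcover hy)
    have hαβ : ‖α - β‖ ≤ 2 := (norm_sub_le α β).trans (by linarith [hΓ α hαΓ, hΓ β hβΓ])
    have hyc : ‖y - c‖ ≤ δ / 8 := (mem_ball_iff_norm.1 hyc).le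
    have hαβyc : |(α - β) (y - c)| ≤ 2 * (δ / 8) := by
      simpa only [← Real.norm_eq_abs] using
        ((α - β).le_opNorm _).trans (mul_le_mul hαβ hyc (norm_nonneg _) zero_le_two)
    have hαc := hα c hcs
    have hβc := hβ c hcs
    calc |α y - β y| = |(α - β) (y - c) + (α c - φ₀ c) - (β c - φ₀ c)| := by
          congr 1; simp only [map_sub, sub_apply]; ring
      _ ≤ |(α - β) (y - c)| + |α c - φ₀ c| + |β c - φ₀ c| :=
          (abs_sub _ _).trans (add_le_add_left (abs_add_le _ _) _)
      _ ≤ δ / 2 := by linarith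
  refine (lipNorm_le (by positivity) fun p q => ?_).trans_lt (by linarith : δ / 2 < δ)
  rcases eq_or_ne p q with rfl | hpq
  · simp
  have hd := dist_pos.2 hpq
  have h := hclose _ (subset_closure ⟨p, q, hpq, rfl⟩)
  rw [map_smul, map_smul, smul_eq_mul, smul_eq_mul, ← mul_sub, abs_mul, abs_inv, abs_of_pos hd,
    inv_mul_le_iff₀ hd, mul_comm] at h
  rw [Real.norm_eq_abs, sub_sub_sub_comm, ← map_sub, ← map_sub]
  exact h

lemma ACKWith.exists_approx_of_isGammaFlat {ρ : ℝ} {Γ : Set (StrongDual ℝ Y)}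
    (hΓ : ACKWith Y ρ Γ) {T : M → Y} (hflat : IsGammaFlat Γ T)
    (hT : ∀ p q, ‖T p - T q‖ ≤ dist p q) {t : ℝ} (ht : 0 < t) {U : Set (StrongDual ℝ Y)}
    (hU : IsWeakStarOpen U) (hUΓ : (U ∩ Γ).Nonempty) :
    ∃ y₁ ∈ U ∩ Γ, ∃ e : Y, ‖e‖ = 1 ∧ ∃ F : Y →L[ℝ] Y, ‖F‖ ≤ 1 ∧ y₁ (F e) = 1 ∧
      y₁.comp F = y₁ ∧
      (∀ φ ∈ Γ, 1 < ‖φ.comp F‖ + (1 - t) * ‖φ - φ.comp F‖ → |φ (F e)| ≤ ρ) ∧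
      ∀ φ ∈ Γ, ∃ l : ℝ, |l| ≤ 1 ∧ |φ (F e) - l| ≤ 2 * t ∧
        ∀ p q, |φ (F (T p - T q)) - l * y₁ (T p - T q)| ≤ 2 * t * dist p q := by
  obtain ⟨V', hV'open, hV'U, hV'Γ, hV'flat⟩ := hflat U hU hUΓ (t / 2) (by positivity)
  obtain ⟨V, hVV', -, y₁, hy₁V, e, he, F, -, hF, hy₁Fe, hy₁F, hρ, happrox, hVe⟩ :=
    hΓ.2 t ht (V' ∩ Γ) hV'Γ Set.inter_subset_right ⟨V', hV'open, rfl⟩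
  have hTlip : LipschitzWith 1 T :=
    LipschitzWith.of_dist_le_mul fun p q => by simpa [dist_eq_norm] using hT p q
  have hVy₁ : ∀ v ∈ V, ∀ p q, |v (T p - T q) - y₁ (T p - T q)| ≤ t / 2 * dist p q := by
    intro v hv p q
    have hlip := (v.lipschitz.comp hTlip).sub (y₁.lipschitz.comp hTlip)
    calc |v (T p - T q) - y₁ (T p - T q)|
        = ‖(v (T p) - y₁ (T p)) - (v (T q) - y₁ (T q))‖ := by
          rw [map_sub, map_sub, Real.norm_eq_abs, sub_sub_sub_comm]
      _ ≤ lipNorm (fun x => v (T x) - y₁ (T x)) * dist p q := hlip.norm_sub_le_lipNorm_mul p q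
      _ ≤ t / 2 * dist p q :=
          mul_le_mul_of_nonneg_right (hV'flat v (hVV' hv) y₁ (hVV' hy₁V)).le dist_nonneg
  refine ⟨y₁, ⟨hV'U (hVV' hy₁V).1, (hVV' hy₁V).2⟩, e, he, F, hF.le, hy₁Fe, hy₁F,
    fun φ hφ h => hρ φ hφ fun hmem => h.not_ge hmem.2, fun φ hφ => ?_⟩
  obtain ⟨n, v, c, hv, hc, hψ⟩ := happrox φ hφ
  refine ⟨∑ k, c k, (Finset.abs_sum_le_sum_abs _ _).trans hc, ?_, fun p q => ?_⟩
  · have h := abs_apply_sub_sum_mul_le (φ.comp F) v hc e ht.le fun k => hVe _ (hv k)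
    rw [he, mul_one, mul_one] at h
    simp only [ContinuousLinearMap.comp_apply] at h
    linarith
  · have h := abs_apply_sub_sum_mul_le (φ.comp F) v hc (T p - T q) (by positivity)
      fun k => hVy₁ _ (hv k) p q
    have hw := mul_le_mul hψ.le (hT p q) (norm_nonneg _) ht.le
    have htd : 0 ≤ t * dist p q := by positivity
    simp only [ContinuousLinearMap.comp_apply] at h
    linarith

theorem exists_saK_near_of_attaining_scalar {Γ : Set (StrongDual ℝ Y)} (hΓ : IsOneNorming Γ)
    {z : M} {T : M → Y} (hT : IsLip0 z T) (hTc : IsLipCompact T)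
    (hT_le : ∀ p q, ‖T p - T q‖ ≤ dist p q) {y₁ : StrongDual ℝ Y} {e : Y} {F : Y →L[ℝ] Y}
    (hy₁ : ‖y₁‖ ≤ 1) (he : ‖e‖ = 1) (hF : ‖F‖ ≤ 1) (hy₁Fe : y₁ (F e) = 1)
    (hy₁F : y₁.comp F = y₁) {ρ t c : ℝ} (ht0 : 0 ≤ t) (ht1 : t ≤ 1) (hc : 0 ≤ c)
    (hρ : ∀ φ ∈ Γ, 1 < ‖φ.comp F‖ + (1 - t) * ‖φ - φ.comp F‖ → |φ (F e)| ≤ ρ)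
    (happrox : ∀ φ ∈ Γ, ∃ l : ℝ, |l| ≤ 1 ∧ |φ (F e) - l| ≤ 2 * t ∧
      ∀ p q, |φ (F (T p - T q)) - l * y₁ (T p - T q)| ≤ 2 * t * dist p q)
    {g : M → ℝ} (hg : IsLip0 z g) (hga : StronglyAttains g)
    (hgy₁ : ∀ p q, |(g p - g q) - y₁ (T p - T q)| ≤ t * dist p q)
    (hA : 1 ≤ (1 - t) * ((1 + c) * lipNorm g))
    (hB : 1 + 3 * t + (2 * t + c * ρ) * lipNorm g ≤ (1 + c) * lipNorm g) :
    ∃ G : M → Y, IsLip0 z G ∧ IsLipCompact G ∧ StronglyAttains G ∧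
      lipNorm (fun x => G x - T x) ≤ 3 * t + (2 * t + c) * (1 + t) := by
  obtain ⟨r, s, hrs, hgrs⟩ := hga
  have hgG : ∀ p q, |g p - g q| ≤ lipNorm g * dist p q := hg.norm_sub_le_lipNorm_mul
  have hgd : ∀ p q, |g p - g q| ≤ (1 + t) * dist p q := fun p q => by
    have hy₁T : |y₁ (T p - T q)| ≤ dist p q := by
      simpa using (y₁.le_opNorm _).trans (mul_le_mul hy₁ (hT_le p q) (norm_nonneg _) zero_le_one)
    linarith [abs_sub_abs_le_abs_sub (g p - g q) (y₁ (T p - T q)), hgy₁ p q]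
  have hC : 0 ≤ (1 + c) * lipNorm g := mul_nonneg (by linarith) (lipNorm_nonneg g)
  set G : M → Y := fun x => (1 - F) (T x) + ((1 + c) * g x) • F e
  have hG : ∀ p q, G p - G q
      = (T p - T q) - F (T p - T q) + ((1 + c) * (g p - g q)) • F e := fun p q => by
    simp only [G, sub_apply, one_apply_eq_self, map_sub]
    module
  have hG_le : ∀ p q, ‖G p - G q‖ ≤ (1 + c) * lipNorm g * dist p q := fun p q => by
    rw [hG]
    refine hΓ.norm_le (mul_nonneg hC dist_nonneg) fun φ hφ => ?_
    obtain ⟨l, hl, hkl, hu⟩ := happrox φ hφ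
    exact abs_apply_sub_add_smul_le (hΓ.1 φ hφ) he hc ht1 (hT_le p q) (hgG p q) (hgy₁ p q) hl hkl
      (hu p q) (hρ φ hφ) hA hB
  have hG_rs : ‖G r - G s‖ = (1 + c) * lipNorm g * dist r s := by
    refine (hG_le r s).antisymm ?_
    calc (1 + c) * lipNorm g * dist r s = |(1 + c) * (g r - g s)| := by
          rw [abs_mul, abs_of_nonneg (by linarith), ← Real.norm_eq_abs, hgrs, mul_assoc]
      _ ≤ ‖G r - G s‖ := hG r s ▸ abs_le_norm_sub_add_smul hy₁ hy₁F hy₁Fe _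
  refine ⟨G, isLip0_of_norm_sub_le (by simp [G, hT.2, hg.2]) hC hG_le,
    hTc.comp_add_smul (1 - F) (h := fun x => (1 + c) * g x) (K := (1 + c) * lipNorm g)
      (fun p q => ?_) (F e),
    ⟨r, s, hrs, by rw [lipNorm_eq_of_le_of_eq hC hG_le hrs hG_rs, hG_rs]⟩, ?_⟩
  · rw [← mul_sub, abs_mul, abs_of_nonneg (by linarith), mul_assoc]
    exact mul_le_mul_of_nonneg_left (hgG p q) (by linarith)
  refine lipNorm_le (by positivity) fun p q => ?_
  rw [sub_sub_sub_comm, hG, show ∀ a b u : Y, a - b + u - a = u - b from fun _ _ _ => by abel]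
  refine hΓ.norm_le (by positivity) fun φ hφ => ?_
  obtain ⟨l, hl, hkl, hu⟩ := happrox φ hφ
  exact abs_apply_smul_sub_le (hΓ.1 φ hφ) hF he hc (hgd p q) (hgy₁ p q) hl hkl (hu p q)

theorem exists_saK_near_of_lipNorm_eq_one {ρ : ℝ} (hρ0 : 0 ≤ ρ) (hρ1 : ρ < 1)
    {Γ : Set (StrongDual ℝ Y)} (hY : ACKWith Y ρ Γ) {z : M} (hM : SADense M z ℝ) {T : M → Y}
    (hT : IsLip0 z T) (hTc : IsLipCompact T) (hT1 : lipNorm T = 1) {ε : ℝ} (hε : 0 < ε) :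
    ∃ G : M → Y, IsLip0 z G ∧ IsLipCompact G ∧ StronglyAttains G ∧
      lipNorm (fun x => G x - T x) < ε := by
  obtain ⟨t, c, ht, hc, ht2, hconst, hD⟩ := exists_ack_constants hρ0 hρ1 hε
  have hT_le : ∀ p q, ‖T p - T q‖ ≤ dist p q := fun p q => by
    simpa [hT1] using hT.norm_sub_le_lipNorm_mul p q
  obtain ⟨p₀, q₀, hpq₀, hTpq₀⟩ :=
    exists_mul_dist_lt_of_lt_lipNorm (F := T) (r := 1 - t) (by linarith) (by linarith)
  obtain ⟨φ₀, hφ₀Γ, hφ₀⟩ :=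
    hY.1.exists_lt_abs_apply (mul_nonneg (by linarith) dist_nonneg) hTpq₀
  obtain ⟨y₁, ⟨hy₁U, hy₁Γ⟩, e, he, F, hF, hy₁Fe, hy₁F, hρ, happrox⟩ :=
    hY.exists_approx_of_isGammaFlat (hTc.isGammaFlat hY.1.1) hT_le ht
      (isWeakStarOpen_setOf_lt_abs_apply _ _) ⟨φ₀, hφ₀, hφ₀Γ⟩
  obtain ⟨g, hg, hga, hgf⟩ := hM _ (hT.clm_comp y₁) t ht
  have hgy₁ : ∀ p q, |(g p - g q) - y₁ (T p - T q)| ≤ t * dist p q := fun p q => by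
    simpa [sub_sub_sub_comm] using ((hg.sub (hT.clm_comp y₁)).norm_sub_le_lipNorm_mul p q).trans
      (mul_le_mul_of_nonneg_right hgf.le dist_nonneg)
  have hg_lower : 1 - 2 * t ≤ lipNorm g := by
    have hgG : |g p₀ - g q₀| ≤ lipNorm g * dist p₀ q₀ := hg.norm_sub_le_lipNorm_mul p₀ q₀
    refine le_of_mul_le_mul_right ?_ (dist_pos.2 hpq₀)
    linarith [abs_sub_abs_le_abs_sub (y₁ (T p₀ - T q₀)) (g p₀ - g q₀), hgy₁ p₀ q₀,
      abs_sub_comm (y₁ (T p₀ - T q₀)) (g p₀ - g q₀), show (1 - t) * dist p₀ q₀ < _ from hy₁U]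
  obtain ⟨G, hG, hGc, hGa, hGT⟩ := exists_saK_near_of_attaining_scalar hY.1 hT hTc hT_le
    (hY.1.1 y₁ hy₁Γ) he hF hy₁Fe hy₁F ht.le (by linarith) hc hρ happrox hg hga hgy₁
    (hconst _ hg_lower).1 (hconst _ hg_lower).2
  exact ⟨G, hG, hGc, hGa, hGT.trans_lt hD⟩

end Construction

theorem saKDense_of_ACK_general {M Y : Type*} [MetricSpace M]
    [NormedAddCommGroup Y] [NormedSpace ℝ Y]
    (z : M) (hM : SADense M z ℝ)
    (ρ : ℝ) (hρ0 : 0 ≤ ρ) (hρ1 : ρ < 1) (hY : HasACK Y ρ) :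
    SAKDense M z Y := by
  obtain ⟨Γ, hΓ⟩ := hY
  intro F hF hFc ε hε
  rcases (lipNorm_nonneg F).eq_or_lt with hL | hL
  · -- a strongly norm-attaining map exists only if `M` has two distinct points
    obtain ⟨-, -, ⟨p, q, hpq, -⟩, -⟩ :=
      hM (fun _ => 0) ⟨⟨0, LipschitzWith.const 0⟩, rfl⟩ 1 one_pos
    have h0 : lipNorm (fun _ : M => (0 : Y)) = 0 :=
      (lipNorm_le le_rfl (by simp)).antisymm (lipNorm_nonneg _)
    refine ⟨fun _ => 0, ⟨⟨0, LipschitzWith.const 0⟩, rfl⟩, isLipCompact_zero,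
      ⟨p, q, hpq, by simp [h0]⟩, (lipNorm_le le_rfl fun p q => ?_).trans_lt hε⟩
    rw [zero_sub, zero_sub, neg_sub_neg, zero_mul]
    simpa [← hL] using hF.norm_sub_le_lipNorm_mul q p
  obtain ⟨G, hG, hGc, hGa, hGF⟩ := exists_saK_near_of_lipNorm_eq_one hρ0 hρ1 hΓ hM
    (hF.const_smul (lipNorm F)⁻¹) (hFc.const_smul (lipNorm F)⁻¹)
    (by rw [lipNorm_const_smul, abs_inv, abs_of_pos hL, inv_mul_cancel₀ hL.ne'])
    (div_pos hε hL)
  refine ⟨fun x => lipNorm F • G x, hG.const_smul _, hGc.const_smul _, hGa.const_smul _, ?_⟩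
  have hscale : (fun x => lipNorm F • G x - F x)
      = fun x => lipNorm F • (G x - (lipNorm F)⁻¹ • F x) := by
    ext x
    rw [smul_sub, smul_inv_smul₀ hL.ne']
  rw [hscale, lipNorm_const_smul, abs_of_pos hL]
  exact (lt_div_iff₀' hL).1 hGF

/-- If `SA(M, ℝ)` is dense in `Lip₀(M, ℝ)` and `Y` has ACK structure with parameter
`ρ ∈ [0,1)`, then `SA_K(M, Y)` is dense in `Lipc(M, Y)`. -/
theorem saKDense_of_ACK {M Y : Type*} [MetricSpace M] [CompleteSpace M]
    [NormedAddCommGroup Y] [NormedSpace ℝ Y] [CompleteSpace Y]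
    (z : M) (hM : SADense M z ℝ)
    (ρ : ℝ) (hρ0 : 0 ≤ ρ) (hρ1 : ρ < 1) (hY : HasACK Y ρ) :
    SAKDense M z Y :=
  saKDense_of_ACK_general z hM ρ hρ0 hρ1 hY
end

section
/- Let M be a pointed metric space such that SA(M, ℝ) is dense in Lip₀(M, ℝ) and let K be a compact Hausdorff topological space. Then SA_K(M, C(K, ℝ)) is dense in Lipc(M, C(K, ℝ)), where C(K, ℝ) is the Banach space of real-valued continuous functions on K with the supremum norm. -/
open Set Metric NNReal MeasureTheory

namespace SAKAux

variable {M Y : Type*} [MetricSpace M] [NormedAddCommGroup Y]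

lemma bddAbove_lipSet {F : M → Y} {c : ℝ≥0} (h : LipschitzWith c F) :
    BddAbove {r : ℝ | ∃ p q : M, p ≠ q ∧ r = ‖F p - F q‖ / dist p q} := by
  refine ⟨c, ?_⟩
  rintro r ⟨p, q, hpq, rfl⟩
  have hd : (0:ℝ) < dist p q := dist_pos.2 hpq
  rw [div_le_iff₀ hd]
  simpa [dist_eq_norm] using h.dist_le_mul p q

lemma ratio_le_lipNorm {F : M → Y} {c : ℝ≥0} (h : LipschitzWith c F) {p q : M} (hpq : p ≠ q) :
    ‖F p - F q‖ / dist p q ≤ lipNorm F :=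
  le_csSup (bddAbove_lipSet h) ⟨p, q, hpq, rfl⟩

lemma lipNorm_nonneg {F : M → Y} {c : ℝ≥0} (h : LipschitzWith c F)
    (hne : ∃ p q : M, p ≠ q) : 0 ≤ lipNorm F := by
  obtain ⟨p, q, hpq⟩ := hne
  exact le_trans (div_nonneg (norm_nonneg _) dist_nonneg) (ratio_le_lipNorm h hpq)

lemma norm_sub_le_lipNorm {F : M → Y} {c : ℝ≥0} (h : LipschitzWith c F) (p q : M) :
    ‖F p - F q‖ ≤ lipNorm F * dist p q := by
  by_cases hpq : p = q
  · simp [hpq]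
  · have hd : (0:ℝ) < dist p q := dist_pos.2 hpq
    rw [← div_le_iff₀ hd]
    exact ratio_le_lipNorm h hpq

lemma lipNorm_le {F : M → Y} {c : ℝ} (hc : 0 ≤ c)
    (h : ∀ p q : M, p ≠ q → ‖F p - F q‖ ≤ c * dist p q) : lipNorm F ≤ c := by
  apply Real.sSup_le _ hc
  rintro r ⟨p, q, hpq, rfl⟩
  have hd : (0:ℝ) < dist p q := dist_pos.2 hpq
  rw [div_le_iff₀ hd]
  exact h p q hpq

lemma lipNorm_zero (hne : ∃ p q : M, p ≠ q) : lipNorm (fun _ : M => (0:Y)) = 0 :=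
  le_antisymm (lipNorm_le le_rfl (by intro p q _; simp))
    (lipNorm_nonneg (LipschitzWith.const 0) hne)

lemma lipNorm_sub_comm (A B : M → Y) :
    lipNorm (fun x => A x - B x) = lipNorm (fun x => B x - A x) := by
  unfold lipNorm
  congr 1
  ext r
  constructor
  · rintro ⟨p, q, hpq, rfl⟩
    refine ⟨p, q, hpq, ?_⟩
    have : (B p - A p) - (B q - A q) = -((A p - B p) - (A q - B q)) := by abel
    rw [this, norm_neg]
  · rintro ⟨p, q, hpq, rfl⟩
    refine ⟨p, q, hpq, ?_⟩
    have : (A p - B p) - (A q - B q) = -((B p - A p) - (B q - A q)) := by abel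
    rw [this, norm_neg]

lemma lipNorm_add_le {A B : M → Y} {cA cB : ℝ≥0} (hA : LipschitzWith cA A)
    (hB : LipschitzWith cB B) (hne : ∃ p q : M, p ≠ q) :
    lipNorm (fun x => A x + B x) ≤ lipNorm A + lipNorm B := by
  apply lipNorm_le (add_nonneg (lipNorm_nonneg hA hne) (lipNorm_nonneg hB hne))
  intro p q hpq
  calc ‖(A p + B p) - (A q + B q)‖ ≤ ‖A p - A q‖ + ‖B p - B q‖ := by
        have : (A p + B p) - (A q + B q) = (A p - A q) + (B p - B q) := by abel
        rw [this]; exact norm_add_le _ _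
    _ ≤ lipNorm A * dist p q + lipNorm B * dist p q :=
        add_le_add (norm_sub_le_lipNorm hA p q) (norm_sub_le_lipNorm hB p q)
    _ = (lipNorm A + lipNorm B) * dist p q := by ring

lemma lipschitz_const_mul {c : ℝ} {ψ : M → ℝ} {cψ : ℝ≥0} (h : LipschitzWith cψ ψ) :
    LipschitzWith (Real.nnabs c * cψ) (fun x => c * ψ x) := by
  apply LipschitzWith.of_dist_le_mul
  intro x y
  have := h.dist_le_mul x y
  rw [Real.dist_eq] at this ⊢
  have h1 : c * ψ x - c * ψ y = c * (ψ x - ψ y) := by ring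
  rw [h1, abs_mul]
  push_cast
  calc |c| * |ψ x - ψ y| ≤ |c| * (↑cψ * dist x y) := by
        exact mul_le_mul_of_nonneg_left this (abs_nonneg c)
    _ = |c| * ↑cψ * dist x y := by ring

lemma lipNorm_const_mul {c : ℝ} {ψ : M → ℝ} {cψ : ℝ≥0} (h : LipschitzWith cψ ψ)
    (hc : 0 < c) (hne : ∃ p q : M, p ≠ q) :
    lipNorm (fun x => c * ψ x) = c * lipNorm ψ := by
  apply le_antisymm
  · apply lipNorm_le (mul_nonneg hc.le (lipNorm_nonneg h hne))
    intro p q hpq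
    have h1 : c * ψ p - c * ψ q = c * (ψ p - ψ q) := by ring
    rw [h1]
    calc ‖c * (ψ p - ψ q)‖ = c * ‖ψ p - ψ q‖ := by
          rw [Real.norm_eq_abs, Real.norm_eq_abs, abs_mul, abs_of_pos hc]
      _ ≤ c * (lipNorm ψ * dist p q) :=
          mul_le_mul_of_nonneg_left (norm_sub_le_lipNorm h p q) hc.le
      _ = c * lipNorm ψ * dist p q := by ring
  · rw [← le_div_iff₀' hc]
    apply lipNorm_le (div_nonneg (lipNorm_nonneg (lipschitz_const_mul h) hne) hc.le)
    intro p q hpq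
    rw [div_mul_eq_mul_div, le_div_iff₀' hc]
    have hcc : ‖c * ψ p - c * ψ q‖ = c * ‖ψ p - ψ q‖ := by
      rw [show c * ψ p - c * ψ q = c * (ψ p - ψ q) by ring, Real.norm_eq_abs, abs_mul,
        abs_of_pos hc, Real.norm_eq_abs]
    rw [← hcc]
    exact norm_sub_le_lipNorm (lipschitz_const_mul h) p q

end SAKAux

/-- If `SA(M, ℝ)` is dense in `Lip₀(M, ℝ)` and `K` is a compact Hausdorff space, then
`SA_K(M, C(K, ℝ))` is dense in `Lipc(M, C(K, ℝ))`. -/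
theorem saKDense_continuousMap_real {M : Type*} [MetricSpace M] [CompleteSpace M]
    (z : M) (hM : SADense M z ℝ)
    (K : Type*) [TopologicalSpace K] [CompactSpace K] [T2Space K] :
    SAKDense M z C(K, ℝ) := by
  intro F hF0 hFc ε hε
  have hne : ∃ p q : M, p ≠ q := by
    by_contra h
    push_neg at h
    obtain ⟨G, hG0, ⟨p, q, hpq, _⟩, _⟩ :=
      hM (fun _ => 0) ⟨⟨0, LipschitzWith.const 0⟩, rfl⟩ 1 one_pos
    exact hpq (h p q)
  obtain ⟨p₀, q₀, hp₀q₀⟩ := hne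
  obtain ⟨⟨cF, hFlip⟩, hFz⟩ := hF0
  by_cases hF : ∀ x, F x = 0
  · -- F is identically zero, take G = 0
    refine ⟨fun _ => 0, ⟨⟨0, LipschitzWith.const 0⟩, rfl⟩, ?_, ?_, ?_⟩
    · have hsub : {y : C(K,ℝ) | ∃ p q : M, p ≠ q ∧
          y = (dist p q)⁻¹ • ((fun _ => (0:C(K,ℝ))) p - (fun _ => (0:C(K,ℝ))) q)} ⊆ {0} := by
        rintro y ⟨p, q, hpq, rfl⟩; simp
      exact IsCompact.of_isClosed_subset isCompact_singleton isClosed_closure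
        (closure_minimal hsub isClosed_singleton)
    · exact ⟨p₀, q₀, hp₀q₀, by
        rw [SAKAux.lipNorm_zero ⟨p₀, q₀, hp₀q₀⟩]; simp⟩
    · have h0 : (fun x => (fun _ : M => (0:C(K,ℝ))) x - F x) = fun _ : M => (0:C(K,ℝ)) := by
        funext x; rw [hF x]; simp
      rw [h0, SAKAux.lipNorm_zero ⟨p₀, q₀, hp₀q₀⟩]
      exact hε
  · push_neg at hF
    obtain ⟨x₀, hx₀⟩ := hF
    have hne : ∃ p q : M, p ≠ q := ⟨p₀, q₀, hp₀q₀⟩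
    have hKne : Nonempty K := by
      by_contra h
      rw [not_nonempty_iff] at h
      exact hx₀ (ContinuousMap.ext fun t => (h.false t).elim)
    set L := lipNorm F with hLdef
    have hx₀z : x₀ ≠ z := fun h => hx₀ (h ▸ hFz)
    have hL : 0 < L := by
      have h1 : 0 < ‖F x₀ - F z‖ := by rw [hFz, sub_zero, norm_pos_iff]; exact hx₀
      have h2 : 0 < ‖F x₀ - F z‖ / dist x₀ z := div_pos h1 (dist_pos.2 hx₀z)
      exact lt_of_lt_of_le h2 (SAKAux.ratio_le_lipNorm hFlip hx₀z)
    -- the Lipschitz image of F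
    set S := {v : C(K,ℝ) | ∃ p q : M, p ≠ q ∧ v = (dist p q)⁻¹ • (F p - F q)} with hSdef
    have hCs : IsCompact (closure S) := hFc
    have hSnorm : ∀ v ∈ S, ‖v‖ ≤ L := by
      rintro v ⟨p, q, hpq, rfl⟩
      have hd : (0:ℝ) < dist p q := dist_pos.2 hpq
      rw [norm_smul (dist p q)⁻¹ (F p - F q), Real.norm_eq_abs,
        abs_of_nonneg (inv_nonneg.2 dist_nonneg), inv_mul_le_iff₀ hd, mul_comm]
      exact SAKAux.norm_sub_le_lipNorm hFlip p q
    have hCnorm : ∀ v ∈ closure S, ‖v‖ ≤ L := fun v hv =>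
      closure_minimal hSnorm (isClosed_le continuous_norm continuous_const) hv
    -- the coordinate functions are Lipschitz
    have hftlip : ∀ t : K, LipschitzWith cF (fun x => F x t) := by
      intro t
      apply LipschitzWith.of_dist_le_mul
      intro x y
      calc dist (F x t) (F y t) = ‖(F x - F y) t‖ := by
            rw [Real.dist_eq]; simp
        _ ≤ ‖F x - F y‖ := ContinuousMap.norm_coe_le_norm _ t
        _ = dist (F x) (F y) := (dist_eq_norm _ _).symm
        _ ≤ cF * dist x y := hFlip.dist_le_mul x y
    have hftle : ∀ t : K, lipNorm (fun x => F x t) ≤ L := by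
      intro t
      apply SAKAux.lipNorm_le hL.le
      intro p q hpq
      calc ‖F p t - F q t‖ = ‖(F p - F q) t‖ := by simp
        _ ≤ ‖F p - F q‖ := ContinuousMap.norm_coe_le_norm _ t
        _ ≤ L * dist p q := SAKAux.norm_sub_le_lipNorm hFlip p q
    -- find a maximizing point t₀
    have hSne : S.Nonempty := ⟨_, p₀, q₀, hp₀q₀, rfl⟩
    obtain ⟨w₀, hw₀mem, hw₀max⟩ :=
      (hCs.prod isCompact_univ).exists_isMaxOn
        (⟨(hSne.some, Classical.arbitrary K),
          subset_closure hSne.some_mem, mem_univ _⟩)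
        ((Continuous.abs ContinuousEval.continuous_eval).continuousOn)
    obtain ⟨v₀, t₀⟩ := w₀
    obtain ⟨hv₀mem, -⟩ := hw₀mem
    have happly : ∀ (p q : M), p ≠ q → ∀ t : K,
        ((dist p q)⁻¹ • (F p - F q)) t = (dist p q)⁻¹ * (F p t - F q t) := by
      intro p q hpq t; simp
    have hM₀L : |v₀ t₀| ≤ L := by
      calc |v₀ t₀| = ‖v₀ t₀‖ := (Real.norm_eq_abs _).symm
        _ ≤ ‖v₀‖ := ContinuousMap.norm_coe_le_norm _ t₀
        _ ≤ L := hCnorm v₀ hv₀mem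
    have hLM₀ : L ≤ |v₀ t₀| := by
      apply SAKAux.lipNorm_le (abs_nonneg _)
      intro p q hpq
      have hd : (0:ℝ) < dist p q := dist_pos.2 hpq
      have hvS : (dist p q)⁻¹ • (F p - F q) ∈ S := ⟨p, q, hpq, rfl⟩
      have hvle : ‖(dist p q)⁻¹ • (F p - F q)‖ ≤ |v₀ t₀| := by
        rw [ContinuousMap.norm_le _ (abs_nonneg _)]
        intro t
        have h := hw₀max (⟨subset_closure hvS, mem_univ t⟩ :
          ((dist p q)⁻¹ • (F p - F q), t) ∈ closure S ×ˢ (univ : Set K))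
        rw [Real.norm_eq_abs]
        exact h
      have hnv : ‖(dist p q)⁻¹ • (F p - F q)‖ = ‖F p - F q‖ / dist p q := by
        rw [norm_smul (dist p q)⁻¹ (F p - F q), Real.norm_eq_abs,
          abs_of_nonneg (inv_nonneg.2 dist_nonneg), inv_mul_eq_div]
      rw [hnv, div_le_iff₀ hd] at hvle
      linarith [hvle]
    have hM₀ : |v₀ t₀| = L := le_antisymm hM₀L hLM₀
    -- the Lipschitz norm at t₀ equals L
    have hLf : lipNorm (fun x => F x t₀) = L := by
      refine le_antisymm (hftle t₀) ?_
      apply le_of_forall_pos_le_add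
      intro γ hγ
      obtain ⟨v, hvS, hvd⟩ := Metric.mem_closure_iff.1 hv₀mem γ hγ
      obtain ⟨p, q, hpq, rfl⟩ := hvS
      have hd : (0:ℝ) < dist p q := dist_pos.2 hpq
      have h1 : |((dist p q)⁻¹ • (F p - F q)) t₀| ≤ lipNorm (fun x => F x t₀) := by
        rw [happly p q hpq t₀, abs_mul, abs_of_nonneg (inv_nonneg.2 dist_nonneg),
          inv_mul_eq_div]
        have : |F p t₀ - F q t₀| = ‖(fun x => F x t₀) p - (fun x => F x t₀) q‖ := by
          rw [Real.norm_eq_abs]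
        rw [this]
        exact SAKAux.ratio_le_lipNorm (hftlip t₀) hpq
      have h2 : |v₀ t₀ - ((dist p q)⁻¹ • (F p - F q)) t₀| ≤ dist v₀ ((dist p q)⁻¹ • (F p - F q)) := by
        calc |v₀ t₀ - ((dist p q)⁻¹ • (F p - F q)) t₀|
            = ‖(v₀ - (dist p q)⁻¹ • (F p - F q)) t₀‖ := by rw [Real.norm_eq_abs]; simp
          _ ≤ ‖v₀ - (dist p q)⁻¹ • (F p - F q)‖ := ContinuousMap.norm_coe_le_norm _ t₀
          _ = dist v₀ ((dist p q)⁻¹ • (F p - F q)) := (dist_eq_norm _ _).symm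
      calc L = |v₀ t₀| := hM₀.symm
        _ ≤ |((dist p q)⁻¹ • (F p - F q)) t₀| + |v₀ t₀ - ((dist p q)⁻¹ • (F p - F q)) t₀| := by
            have := abs_sub_abs_le_abs_sub (v₀ t₀) (((dist p q)⁻¹ • (F p - F q)) t₀)
            linarith [abs_nonneg (v₀ t₀ - ((dist p q)⁻¹ • (F p - F q)) t₀)]
        _ ≤ lipNorm (fun x => F x t₀) + γ := add_le_add h1 (le_of_lt (lt_of_le_of_lt h2 hvd))
    -- apply the real SA-density hypothesis
    set δ := min (ε/4) (L/2) with hδdef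
    have hδpos : 0 < δ := lt_min (by linarith) (by linarith)
    have hδε : δ ≤ ε/4 := min_le_left _ _
    have hδL : δ ≤ L/2 := min_le_right _ _
    obtain ⟨ψ, ⟨⟨cψ, hψlip⟩, hψz⟩, ⟨p, q, hpq, hatt⟩, hclose⟩ :=
      hM (fun x => F x t₀) ⟨⟨cF, hftlip t₀⟩, by show F z t₀ = 0; rw [hFz]; simp⟩ δ hδpos
    have hsublip : LipschitzWith (cψ + cF) (fun x => ψ x - F x t₀) :=
      LipschitzWith.sub hψlip (hftlip t₀)
    have hψle : lipNorm ψ ≤ L + δ := by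
      have h1 := SAKAux.lipNorm_add_le hsublip (hftlip t₀) hne
      simp only [sub_add_cancel] at h1
      have h2 : lipNorm (fun x => ψ x) = lipNorm ψ := rfl
      rw [h2] at h1
      calc lipNorm ψ ≤ lipNorm (fun x => ψ x - F x t₀) + lipNorm (fun x => F x t₀) := h1
        _ ≤ δ + L := add_le_add hclose.le (hftle t₀)
        _ = L + δ := by ring
    have hψge : L - δ ≤ lipNorm ψ := by
      have hsublip' : LipschitzWith (cF + cψ) (fun x => F x t₀ - ψ x) :=
        LipschitzWith.sub (hftlip t₀) hψlip
      have h1 := SAKAux.lipNorm_add_le hsublip' hψlip hne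
      simp only [sub_add_cancel] at h1
      have h2 : lipNorm (fun x => F x t₀) = L := hLf
      rw [h2] at h1
      have h3 : lipNorm (fun x => F x t₀ - ψ x) = lipNorm (fun x => ψ x - F x t₀) :=
        SAKAux.lipNorm_sub_comm _ _
      rw [h3] at h1
      linarith [hclose.le]
    have hψpos : 0 < lipNorm ψ := by linarith
    set c := L / lipNorm ψ with hcdef
    have hcpos : 0 < c := div_pos hL hψpos
    set g0 : M → ℝ := fun x => c * ψ x with hg0def
    have hg0lip : LipschitzWith (Real.nnabs c * cψ) g0 := SAKAux.lipschitz_const_mul hψlip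
    have hg0L : lipNorm g0 = L := by
      rw [hg0def, SAKAux.lipNorm_const_mul hψlip hcpos hne, hcdef,
        div_mul_cancel₀ _ hψpos.ne']
    have hatt0 : ‖g0 p - g0 q‖ = L * dist p q := by
      have h1 : g0 p - g0 q = c * (ψ p - ψ q) := by rw [hg0def]; ring
      rw [h1, Real.norm_eq_abs, abs_mul, abs_of_pos hcpos, ← Real.norm_eq_abs, hatt,
        hcdef]
      field_simp
    have hcd : |L - lipNorm ψ| ≤ δ := abs_le.2 ⟨by linarith, by linarith⟩
    -- closeness of g0 to the coordinate function at t₀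
    have hflip0 : LipschitzWith (Real.nnabs c * cψ + cF) (fun x => g0 x - F x t₀) :=
      LipschitzWith.sub hg0lip (hftlip t₀)
    have hg0close : lipNorm (fun x => g0 x - F x t₀) ≤ 2*δ := by
      apply SAKAux.lipNorm_le (by linarith)
      intro x y hxy
      have e1 : (g0 x - F x t₀) - (g0 y - F y t₀)
          = (c - 1) * (ψ x - ψ y) + ((ψ x - F x t₀) - (ψ y - F y t₀)) := by
        rw [hg0def]; ring
      have b1 : ‖(c - 1) * (ψ x - ψ y)‖ ≤ δ * dist x y := by
        rw [Real.norm_eq_abs, abs_mul]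
        have h2 : |c - 1| * lipNorm ψ = |L - lipNorm ψ| := by
          rw [hcdef]
          rw [show L / lipNorm ψ - 1 = (L - lipNorm ψ) / lipNorm ψ by field_simp]
          rw [abs_div, abs_of_pos hψpos, div_mul_cancel₀ _ hψpos.ne']
        calc |c - 1| * |ψ x - ψ y| ≤ |c - 1| * (lipNorm ψ * dist x y) := by
              apply mul_le_mul_of_nonneg_left _ (abs_nonneg _)
              rw [← Real.norm_eq_abs]
              exact SAKAux.norm_sub_le_lipNorm hψlip x y
          _ = |L - lipNorm ψ| * dist x y := by rw [← h2]; ring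
          _ ≤ δ * dist x y := mul_le_mul_of_nonneg_right hcd dist_nonneg
      have b2 : ‖(ψ x - F x t₀) - (ψ y - F y t₀)‖ ≤ δ * dist x y := by
        calc ‖(ψ x - F x t₀) - (ψ y - F y t₀)‖
            ≤ lipNorm (fun x => ψ x - F x t₀) * dist x y :=
              SAKAux.norm_sub_le_lipNorm hsublip x y
          _ ≤ δ * dist x y := mul_le_mul_of_nonneg_right hclose.le dist_nonneg
      calc ‖(g0 x - F x t₀) - (g0 y - F y t₀)‖
          ≤ ‖(c - 1) * (ψ x - ψ y)‖ + ‖(ψ x - F x t₀) - (ψ y - F y t₀)‖ := by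
            rw [e1]; exact norm_add_le _ _
        _ ≤ δ * dist x y + δ * dist x y := add_le_add b1 b2
        _ = 2*δ * dist x y := by ring
    -- tube lemma: a neighborhood V of t₀ on which all v ∈ closure S move by < δ
    have hopen : IsOpen {w : C(K,ℝ) × K | |w.1 w.2 - w.1 t₀| < δ} := by
      have hc1 : Continuous fun w : C(K,ℝ) × K => w.1 w.2 := ContinuousEval.continuous_eval
      have hc2 : Continuous fun w : C(K,ℝ) × K => w.1 t₀ := by
        have : Continuous fun w : C(K,ℝ) × K => ((w.1 : C(K,ℝ)), t₀) :=
          continuous_fst.prodMk continuous_const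
        exact ContinuousEval.continuous_eval.comp this
      exact isOpen_lt ((hc1.sub hc2).abs) continuous_const
    have hsub0 : closure S ×ˢ ({t₀} : Set K) ⊆ {w : C(K,ℝ) × K | |w.1 w.2 - w.1 t₀| < δ} := by
      rintro ⟨v, t⟩ ⟨hv, ht⟩
      have ht' : t = t₀ := ht
      subst ht'
      simpa using hδpos
    obtain ⟨u, V, hu_open, hV_open, hCs_u, ht₀V, huV⟩ :=
      generalized_tube_lemma hCs isCompact_singleton hopen hsub0
    have ht₀ : t₀ ∈ V := ht₀V rfl
    have hVsmall : ∀ v ∈ closure S, ∀ t ∈ V, |v t - v t₀| < δ := by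
      intro v hv t ht
      exact huV (show (v, t) ∈ u ×ˢ V from ⟨hCs_u hv, ht⟩)
    -- Urysohn function
    obtain ⟨φ, hφ0, hφ1, hφ01⟩ :=
      exists_continuous_zero_one_of_isClosed hV_open.isClosed_compl isClosed_singleton
        (disjoint_singleton_right.2 (fun h => h ht₀))
    have hφt₀ : φ t₀ = 1 := by
      have := hφ1 (mem_singleton t₀); simpa using this
    have hφzero : ∀ t, t ∉ V → φ t = 0 := by
      intro t ht
      have := hφ0 (ht : t ∈ (Vᶜ : Set K)); simpa using this
    -- the perturbed map
    set G : M → C(K,ℝ) := fun x => (1 - φ) * F x + g0 x • φ with hGdef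
    have hGapply : ∀ x t, G x t = (1 - φ t) * F x t + g0 x * φ t := by
      intro x t; simp [hGdef]
    have hGdiff : ∀ x y t, (G x - G y) t
        = (1 - φ t) * (F x t - F y t) + (g0 x - g0 y) * φ t := by
      intro x y t
      simp only [ContinuousMap.sub_apply, hGapply]
      ring
    have hFbd : ∀ (x y : M) (t : K), |F x t - F y t| ≤ L * dist x y := by
      intro x y t
      calc |F x t - F y t| = ‖(F x - F y) t‖ := by rw [Real.norm_eq_abs]; simp
        _ ≤ ‖F x - F y‖ := ContinuousMap.norm_coe_le_norm _ t
        _ ≤ L * dist x y := SAKAux.norm_sub_le_lipNorm hFlip x y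
    have hg0bd : ∀ x y : M, |g0 x - g0 y| ≤ L * dist x y := by
      intro x y
      rw [← Real.norm_eq_abs, ← hg0L]
      exact SAKAux.norm_sub_le_lipNorm hg0lip x y
    have hGbd : ∀ x y : M, ‖G x - G y‖ ≤ L * dist x y := by
      intro x y
      rw [ContinuousMap.norm_le _ (mul_nonneg hL.le dist_nonneg)]
      intro t
      rw [Real.norm_eq_abs, hGdiff x y t]
      obtain ⟨hφ0t, hφ1t⟩ := hφ01 t
      have h1 := hFbd x y t
      have h2 := hg0bd x y
      calc |(1 - φ t) * (F x t - F y t) + (g0 x - g0 y) * φ t|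
          ≤ |(1 - φ t) * (F x t - F y t)| + |(g0 x - g0 y) * φ t| := abs_add_le _ _
        _ = (1 - φ t) * |F x t - F y t| + |g0 x - g0 y| * φ t := by
            rw [abs_mul, abs_mul, abs_of_nonneg (by linarith : (0:ℝ) ≤ 1 - φ t),
              abs_of_nonneg hφ0t]
        _ ≤ L * dist x y := by nlinarith [abs_nonneg (F x t - F y t), abs_nonneg (g0 x - g0 y)]
    have hGlip : LipschitzWith ⟨L, hL.le⟩ G := by
      apply LipschitzWith.of_dist_le_mul
      intro x y
      rw [dist_eq_norm]
      exact hGbd x y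
    have hg0z : g0 z = 0 := by
      show c * ψ z = 0
      rw [hψz, mul_zero]
    have hGz : G z = 0 := by
      show (1 - φ) * F z + g0 z • φ = 0
      rw [hFz, hg0z]
      simp
    -- strong attainment at (p,q)
    have hGpq : ‖G p - G q‖ = L * dist p q := by
      refine le_antisymm (hGbd p q) ?_
      calc L * dist p q = ‖g0 p - g0 q‖ := hatt0.symm
        _ = ‖(G p - G q) t₀‖ := by
            rw [hGdiff p q t₀, hφt₀]; norm_num
        _ ≤ ‖G p - G q‖ := ContinuousMap.norm_coe_le_norm _ t₀
    have hGL : lipNorm G = L := by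
      refine le_antisymm (SAKAux.lipNorm_le hL.le fun x y _ => hGbd x y) ?_
      have hd : (0:ℝ) < dist p q := dist_pos.2 hpq
      have := SAKAux.ratio_le_lipNorm hGlip hpq
      rw [hGpq, mul_div_assoc, div_self hd.ne', mul_one] at this
      exact this
    -- closeness
    have hGFclose : lipNorm (fun x => G x - F x) < ε := by
      have hb : lipNorm (fun x => G x - F x) ≤ 3*δ := by
        apply SAKAux.lipNorm_le (by linarith)
        intro x y hxy
        have hd : (0:ℝ) < dist x y := dist_pos.2 hxy
        rw [ContinuousMap.norm_le _ (mul_nonneg (by linarith) dist_nonneg)]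
        intro t
        have e1 : ((G x - F x) - (G y - F y)) t
            = φ t * ((g0 x - g0 y) - (F x t - F y t)) := by
          simp only [ContinuousMap.sub_apply, hGapply]
          ring
        rw [Real.norm_eq_abs, e1]
        by_cases htV : t ∈ V
        · obtain ⟨hφ0t, hφ1t⟩ := hφ01 t
          have hvS : (dist x y)⁻¹ • (F x - F y) ∈ S := ⟨x, y, hxy, rfl⟩
          have hv := hVsmall _ (subset_closure hvS) t htV
          have hvt : ((dist x y)⁻¹ • (F x - F y)) t = (dist x y)⁻¹ * (F x t - F y t) := by simp
          have hvt₀ : ((dist x y)⁻¹ • (F x - F y)) t₀ = (dist x y)⁻¹ * (F x t₀ - F y t₀) := by simp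
          rw [hvt, hvt₀] at hv
          have h3 : |(F x t - F y t) - (F x t₀ - F y t₀)| ≤ δ * dist x y := by
            have : (dist x y)⁻¹ * (F x t - F y t) - (dist x y)⁻¹ * (F x t₀ - F y t₀)
                = ((F x t - F y t) - (F x t₀ - F y t₀)) / dist x y := by
              field_simp
            rw [this, abs_div, abs_of_pos hd, div_lt_iff₀ hd] at hv
            linarith
          have h4 : |(g0 x - g0 y) - (F x t₀ - F y t₀)| ≤ 2*δ * dist x y := by
            have h5 : (g0 x - g0 y) - (F x t₀ - F y t₀)
                = (g0 x - F x t₀) - (g0 y - F y t₀) := by ring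
            rw [h5, ← Real.norm_eq_abs]
            calc ‖(g0 x - F x t₀) - (g0 y - F y t₀)‖
                ≤ lipNorm (fun x => g0 x - F x t₀) * dist x y :=
                  SAKAux.norm_sub_le_lipNorm hflip0 x y
              _ ≤ 2*δ * dist x y := mul_le_mul_of_nonneg_right hg0close dist_nonneg
          have h6 : |(g0 x - g0 y) - (F x t - F y t)| ≤ 3*δ * dist x y := by
            have : (g0 x - g0 y) - (F x t - F y t)
                = ((g0 x - g0 y) - (F x t₀ - F y t₀)) - ((F x t - F y t) - (F x t₀ - F y t₀)) := by
              ring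
            rw [this]
            calc |((g0 x - g0 y) - (F x t₀ - F y t₀)) - ((F x t - F y t) - (F x t₀ - F y t₀))|
                ≤ |(g0 x - g0 y) - (F x t₀ - F y t₀)| + |(F x t - F y t) - (F x t₀ - F y t₀)| :=
                  abs_sub _ _
              _ ≤ 3*δ * dist x y := by linarith
          calc |φ t * ((g0 x - g0 y) - (F x t - F y t))|
              = φ t * |(g0 x - g0 y) - (F x t - F y t)| := by
                rw [abs_mul, abs_of_nonneg hφ0t]
            _ ≤ 1 * |(g0 x - g0 y) - (F x t - F y t)| := by
                apply mul_le_mul_of_nonneg_right hφ1t (abs_nonneg _)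
            _ ≤ 3*δ * dist x y := by rw [one_mul]; exact h6
        · rw [hφzero t htV]
          simp
          positivity
      calc lipNorm (fun x => G x - F x) ≤ 3*δ := hb
        _ < ε := by linarith
    -- Lipschitz compactness of G
    have hGc : IsLipCompact G := by
      set Ψ : C(K,ℝ) × ℝ → C(K,ℝ) := fun w => (1 - φ) * w.1 + w.2 • φ with hΨdef
      have hΨcont : Continuous Ψ := by
        apply Continuous.add
        · exact continuous_const.mul continuous_fst
        · exact continuous_snd.smul continuous_const
      have himg : IsCompact (Ψ '' (closure S ×ˢ Icc (-L) L)) :=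
        (hCs.prod isCompact_Icc).image hΨcont
      have hTsub : {y : C(K,ℝ) | ∃ p' q' : M, p' ≠ q' ∧ y = (dist p' q')⁻¹ • (G p' - G q')}
          ⊆ Ψ '' (closure S ×ˢ Icc (-L) L) := by
        rintro y ⟨x, y', hxy, rfl⟩
        have hd : (0:ℝ) < dist x y' := dist_pos.2 hxy
        refine ⟨((dist x y')⁻¹ • (F x - F y'), (dist x y')⁻¹ * (g0 x - g0 y')),
          ⟨subset_closure ⟨x, y', hxy, rfl⟩, ?_⟩, ?_⟩
        · rw [mem_Icc, ← abs_le]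
          have h7 : |g0 x - g0 y'| ≤ L * dist x y' := hg0bd x y'
          have h8 : |(dist x y')⁻¹ * (g0 x - g0 y')| = |g0 x - g0 y'| / dist x y' := by
            rw [abs_mul, abs_of_nonneg (inv_nonneg.2 dist_nonneg), inv_mul_eq_div]
          rw [h8, div_le_iff₀ hd]
          linarith
        · apply ContinuousMap.ext
          intro t
          simp only [hΨdef, ContinuousMap.add_apply, ContinuousMap.mul_apply,
            ContinuousMap.sub_apply, ContinuousMap.one_apply, ContinuousMap.smul_apply,
            smul_eq_mul]
          have h9 : (G x) t - (G y') t
              = (1 - φ t) * ((F x) t - (F y') t) + (g0 x - g0 y') * φ t := by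
            have := hGdiff x y' t
            simpa using this
          rw [h9]
          ring
      exact IsCompact.of_isClosed_subset himg isClosed_closure
        (closure_minimal hTsub himg.isClosed)
    exact ⟨G, ⟨⟨⟨L, hL.le⟩, hGlip⟩, hGz⟩, hGc, ⟨p, q, hpq, by rw [hGL]; exact hGpq⟩, hGFclose⟩
end
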